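/- arXiv:1910.13421 — 3 statements merged into one kernel-verified Lean document; each statement's English description precedes it below -/
import Mathlib

section
/- If a nonzero (not necessarily unital) subalgebra W of the matrix algebra Mat_d(ℝ) does not preserve any proper nontrivial linear subspace of ℝ^d (i.e. the only subspaces V ⊆ ℝ^d with w(V) ⊆ V for all w ∈ W are {0} and ℝ^d), then W contains the identity matrix. -/
/-!
The argument works for `W` acting faithfully on any finitely generated `K`-module `V`.
Adjoining the identity to `W` gives a unital algebra `A` over which `V` is irreducible, hence
semisimple. As `V` is faithful and finitely generated, `A` embeds into a finite power of `V`,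
so `A` is a semisimple ring. Now `W` is a left ideal of `A`, hence has a right unit `e ∈ W`:
every `w ∈ W` kills the range of `1 - e`. The vectors killed by all of `W` form a `W`-invariant
subspace, which is not everything as `W ≠ 0`, so it is zero; therefore `1 - e = 0`.
-/

theorem isSemisimpleRing_of_injective_smul {R M ι : Type*} [Ring R] [AddCommGroup M] [Module R M]
    [IsSemisimpleModule R M] [Finite ι] (v : ι → M)
    (hv : Function.Injective fun r : R => fun i => r • v i) : IsSemisimpleRing R :=
  IsSemisimpleModule.of_injective (LinearMap.pi fun i => LinearMap.toSpanSingleton R M (v i)) hv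

theorem IsSemisimpleRing.exists_mem_forall_mul_eq_self {R : Type*} [Ring R] [IsSemisimpleRing R]
    (I : Ideal R) : ∃ e ∈ I, ∀ a ∈ I, a * e = a := by
  obtain ⟨e, he, rfl⟩ := IsSemisimpleRing.ideal_eq_span_idempotent I
  refine ⟨e, Ideal.mem_span_singleton_self e, fun a ha => ?_⟩
  obtain ⟨r, rfl⟩ := Ideal.mem_span_singleton'.mp ha
  rw [mul_assoc, he.eq]

instance Matrix.faithfulSMul_mulVec {n R : Type*} [Fintype n] [DecidableEq n] [Semiring R] :
    FaithfulSMul (Matrix n n R) (n → R) :=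
  ⟨Matrix.ext_iff_smul.mpr⟩

section Irreducible

variable {K S V : Type*} [CommRing K] [Ring S] [Algebra K S] [AddCommGroup V] [Module K V]
  [Module S V] [IsScalarTower K S V]

theorem Subalgebra.isSemisimpleRing_of_isSemisimpleModule [FaithfulSMul S V] [Module.Finite K V]
    (A : Subalgebra K S) [IsSemisimpleModule A V] : IsSemisimpleRing A := by
  obtain ⟨s, hs⟩ := Module.Finite.fg_top (R := K) (M := V)
  refine isSemisimpleRing_of_injective_smul (fun i : s => (i : V)) fun a b hab => ?_
  have hspan : ∀ x ∈ Submodule.span K (s : Set V), a • x = b • x := by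
    intro x hx
    induction hx using Submodule.span_induction with
    | mem x hx => exact congrFun hab ⟨x, hx⟩
    | zero => simp only [smul_zero]
    | add x y _ _ hx hy => rw [smul_add, smul_add, hx, hy]
    | smul c x _ hx => rw [smul_comm a c, smul_comm b c, hx]
  exact Subtype.ext <| FaithfulSMul.eq_of_smul_eq_smul fun x => hspan x (hs ▸ Submodule.mem_top)

variable {W : Submodule K S}

theorem mul_mem_of_mem_adjoin (hmul : ∀ a ∈ W, ∀ b ∈ W, a * b ∈ W) {a w : S}
    (ha : a ∈ Algebra.adjoin K (W : Set S)) (hw : w ∈ W) : a * w ∈ W := by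
  induction ha using Algebra.adjoin_induction generalizing w with
  | mem x hx => exact hmul x hx w hw
  | algebraMap c => simpa only [Algebra.algebraMap_eq_smul_one, smul_mul_assoc, one_mul]
      using W.smul_mem c hw
  | add x y _ _ hx hy => rw [add_mul]; exact W.add_mem (hx hw) (hy hw)
  | mul x y _ _ hx hy => rw [mul_assoc]; exact hx (hy hw)

theorem isSemisimpleModule_adjoin_of_irreducible
    (hirr : ∀ p : Submodule K V, (∀ w ∈ W, ∀ v ∈ p, w • v ∈ p) → p = ⊥ ∨ p = ⊤) :
    IsSemisimpleModule (Algebra.adjoin K (W : Set S)) V := by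
  refine (isSemisimpleModule_iff _ _).mpr ⟨fun p => ?_⟩
  have hinv : ∀ w ∈ W, ∀ v ∈ p.restrictScalars K, w • v ∈ p.restrictScalars K :=
    fun w hw v hv => p.smul_mem (⟨w, Algebra.subset_adjoin hw⟩ : Algebra.adjoin K (W : Set S)) hv
  rcases hirr _ hinv with h | h
  · exact ⟨⊤, by rw [(Submodule.restrictScalars_eq_bot_iff K _ V).mp h]; exact isCompl_bot_top⟩
  · exact ⟨⊥, by rw [(Submodule.restrictScalars_eq_top_iff K _ V).mp h]; exact isCompl_top_bot⟩

theorem eq_zero_of_forall_smul_eq_zero [FaithfulSMul S V] (hW : W ≠ ⊥)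
    (hmul : ∀ a ∈ W, ∀ b ∈ W, a * b ∈ W)
    (hirr : ∀ p : Submodule K V, (∀ w ∈ W, ∀ v ∈ p, w • v ∈ p) → p = ⊥ ∨ p = ⊤) {x : V}
    (hx : ∀ w ∈ W, w • x = 0) : x = 0 := by
  let p : Submodule K V :=
    { carrier := {y | ∀ w ∈ W, w • y = 0}
      add_mem' := fun hy hz w hw => by rw [smul_add, hy w hw, hz w hw, add_zero]
      zero_mem' := fun w _ => smul_zero w
      smul_mem' := fun c y hy w hw => by rw [smul_comm, hy w hw, smul_zero] }
  have hinv : ∀ w ∈ W, ∀ v ∈ p, w • v ∈ p := fun w hw v hv w' hw' => by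
    rw [smul_smul, hv _ (hmul w' hw' w hw)]
  rcases hirr p hinv with h | h
  · exact (Submodule.mem_bot K).mp (h ▸ hx)
  · refine absurd ((Submodule.eq_bot_iff W).mpr fun w hw => ?_) hW
    exact FaithfulSMul.eq_of_smul_eq_smul fun v =>
      ((h ▸ Submodule.mem_top : v ∈ p) w hw).trans (zero_smul S v).symm

theorem one_mem_of_irreducible [FaithfulSMul S V] [Module.Finite K V] (hW : W ≠ ⊥)
    (hmul : ∀ a ∈ W, ∀ b ∈ W, a * b ∈ W)
    (hirr : ∀ p : Submodule K V, (∀ w ∈ W, ∀ v ∈ p, w • v ∈ p) → p = ⊥ ∨ p = ⊤) :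
    (1 : S) ∈ W := by
  set A := Algebra.adjoin K (W : Set S)
  have := isSemisimpleModule_adjoin_of_irreducible hirr
  have := A.isSemisimpleRing_of_isSemisimpleModule (V := V)
  let I : Ideal A :=
    { carrier := {a | (a : S) ∈ W}
      add_mem' := W.add_mem
      zero_mem' := W.zero_mem
      smul_mem' := fun a _ hb => mul_mem_of_mem_adjoin hmul a.2 hb }
  obtain ⟨e, he, hright⟩ := IsSemisimpleRing.exists_mem_forall_mul_eq_self I
  suffices (1 : S) = e from this ▸ he
  refine FaithfulSMul.eq_of_smul_eq_smul (α := V) fun x => sub_eq_zero.mp ?_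
  refine eq_zero_of_forall_smul_eq_zero hW hmul hirr fun w hw => ?_
  have hwe : w * e = w := congrArg Subtype.val (hright ⟨w, Algebra.subset_adjoin hw⟩ hw)
  rw [smul_sub, ← mul_smul, ← mul_smul, mul_one, hwe, sub_self]

end Irreducible

/-- If a nonzero (not necessarily unital) subalgebra `W` of `Mat_d(ℝ)` preserves no
proper nontrivial subspace of `ℝ^d`, then `W` contains the identity matrix. -/
theorem stmt0 {d : ℕ} (W : Submodule ℝ (Matrix (Fin d) (Fin d) ℝ))
    (hW : W ≠ ⊥)
    (hmul : ∀ a ∈ W, ∀ b ∈ W, a * b ∈ W)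
    (hirr : ∀ V : Submodule ℝ (Fin d → ℝ),
      (∀ w ∈ W, ∀ v ∈ V, Matrix.mulVec w v ∈ V) → V = ⊥ ∨ V = ⊤) :
    (1 : Matrix (Fin d) (Fin d) ℝ) ∈ W :=
  one_mem_of_irreducible (V := Fin d → ℝ) hW hmul hirr
end

section
/- Let E be a finite-dimensional real associative algebra, let ν be a Borel probability measure on E, l ≥ 1 an integer, and let μ = ν^{⊞l} ⊟ ν^{⊞l} (the l-fold additive convolution of ν minus an independent copy of itself). Then for every integer m ≥ 1 and every ξ ∈ E*, the Fourier coefficient of the m-fold multiplicative convolution μ^{*m} at ξ is a nonnegative real number, and |\widehat{ν^{*m}}(ξ)|^{(2l)^m} ≤ \widehat{μ^{*m}}(ξ). -/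
open MeasureTheory

variable {E : Type} [NormedRing E] [NormedAlgebra ℝ E] [FiniteDimensional ℝ E]
  [MeasurableSpace E] [BorelSpace E]

/-- Multiplicative convolution of two measures on the algebra `E`. -/
noncomputable def mulConv (μ ν : Measure E) : Measure E :=
  (μ.prod ν).map fun p => p.1 * p.2

/-- Additive convolution of two measures on `E`. -/
noncomputable def addConv (μ ν : Measure E) : Measure E :=
  (μ.prod ν).map fun p => p.1 + p.2

/-- Convolution by difference: pushforward of `μ ⊗ ν` under `(x, y) ↦ x - y`. -/
noncomputable def subConv (μ ν : Measure E) : Measure E :=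
  (μ.prod ν).map fun p => p.1 - p.2

/-- `m`-fold multiplicative convolution power (`mulConvPow μ m = μ^{*m}` for `m ≥ 1`). -/
noncomputable def mulConvPow (μ : Measure E) : ℕ → Measure E
  | 0 => Measure.dirac 1
  | n + 1 => mulConv μ (mulConvPow μ n)

/-- `l`-fold additive convolution power (`addConvPow ν l = ν^{⊞l}` for `l ≥ 1`). -/
noncomputable def addConvPow (ν : Measure E) : ℕ → Measure E
  | 0 => Measure.dirac 0
  | n + 1 => addConv ν (addConvPow ν n)

/-- The Fourier transform of a finite measure on `E` at a linear functional `ξ ∈ E*`. -/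
noncomputable def fourierTransform (μ : Measure E) (ξ : E →L[ℝ] ℝ) : ℂ :=
  ∫ x, Complex.exp (2 * Real.pi * Complex.I * (ξ x : ℂ)) ∂μ

/-!
For `μ = ν^{⊞l} ⊟ ν^{⊞l}` one has `μ̂(η) = |ν̂(η)|^{2l}`, and Fubini gives
`(ρ * P)^(ξ) = ∫ ρ̂(ξ(· y)) dP(y)`. With `ρ = μ` this shows that `(μ^{*m})^(ξ)` is the integral of
the nonnegative function `y ↦ |ν̂(ξ(· y))|^{2l}` against `μ^{*(m-1)}`.

The inequality follows by induction on `m`. Expanding `ν^{*(m+1)} = ν * ν^{*m}` in its first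
factor, Jensen's inequality for `t ↦ t^{(2l)^m}` and the induction hypothesis bound
`|(ν^{*(m+1)})^(ξ)|^{(2l)^m}` by `Re (ν * μ^{*m})^(ξ) ≤ ∫ |ν̂(ξ(· y))| dμ^{*m}(y)`; Jensen's
inequality with exponent `2l` turns the `2l`-th power of the latter into
`∫ |ν̂(ξ(· y))|^{2l} dμ^{*m}(y) = (μ^{*(m+1)})^(ξ)`.
-/

open Real
open scoped ComplexConjugate FourierTransform

section Fourier

variable {A : Type} [NormedRing A] [NormedAlgebra ℝ A] [MeasurableSpace A]

lemma fourierTransform_eq_integral_fourierChar (μ : Measure A) (ξ : A →L[ℝ] ℝ) :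
    fourierTransform μ ξ = ∫ x, (𝐞 (ξ x) : ℂ) ∂μ := by
  simp only [fourierTransform, fourierChar_apply]
  congr with x
  congr 1
  push_cast
  ring

lemma integrable_fourierChar_comp {α : Type*} [MeasurableSpace α] (ρ : Measure α)
    [IsFiniteMeasure ρ] {g : α → ℝ} (hg : AEStronglyMeasurable g ρ) :
    Integrable (fun x => (𝐞 (g x) : ℂ)) ρ :=
  .of_bound ((by fun_prop : Continuous fun t : ℝ => (𝐞 t : ℂ)).comp_aestronglyMeasurable hg)
    1 (ae_of_all _ fun _ => (Circle.norm_coe _).le)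

lemma norm_fourierTransform_le_one (μ : Measure A) [IsProbabilityMeasure μ] (ξ : A →L[ℝ] ℝ) :
    ‖fourierTransform μ ξ‖ ≤ 1 := by
  rw [fourierTransform_eq_integral_fourierChar]
  refine (norm_integral_le_integral_norm _).trans ?_
  simp only [Circle.norm_coe, integral_const, probReal_univ, smul_eq_mul, mul_one, le_refl]

lemma continuous_fourierTransform [OpensMeasurableSpace A] (μ : Measure A) [IsFiniteMeasure μ] :
    Continuous (fourierTransform μ) := by
  simp_rw [funext (fourierTransform_eq_integral_fourierChar μ)]
  refine continuous_of_dominated (bound := fun _ => 1) (fun ξ => ?_)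
    (fun ξ => ae_of_all _ fun _ => (Circle.norm_coe _).le) (integrable_const 1)
    (ae_of_all _ fun x => ?_)
  · exact (by fun_prop : Continuous fun x => (𝐞 (ξ x) : ℂ)).aestronglyMeasurable
  · fun_prop

lemma fourierTransform_map_prod [OpensMeasurableSpace A] (ρ σ : Measure A) [IsFiniteMeasure ρ]
    [IsFiniteMeasure σ] {f : A × A → A} (hf : Measurable f) (ξ : A →L[ℝ] ℝ) :
    fourierTransform ((ρ.prod σ).map f) ξ = ∫ x, ∫ y, (𝐞 (ξ (f (x, y))) : ℂ) ∂σ ∂ρ := by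
  rw [fourierTransform_eq_integral_fourierChar, integral_map hf.aemeasurable
    (by fun_prop : Continuous fun x => (𝐞 (ξ x) : ℂ)).aestronglyMeasurable,
    integral_prod _ (integrable_fourierChar_comp (g := fun p => ξ (f p)) _
      (ξ.continuous.measurable.comp hf).aestronglyMeasurable)]

end Fourier

section DualMul

variable {A : Type*} [NormedRing A] [NormedAlgebra ℝ A]

/-- The paper's `ξy`. -/
noncomputable def dualMulLeft (ξ : A →L[ℝ] ℝ) (y : A) : A →L[ℝ] ℝ :=
  ξ.comp (ContinuousLinearMap.mul ℝ A y)

noncomputable def dualMulRight (ξ : A →L[ℝ] ℝ) (y : A) : A →L[ℝ] ℝ :=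
  ξ.comp ((ContinuousLinearMap.mul ℝ A).flip y)

@[simp] lemma dualMulLeft_apply (ξ : A →L[ℝ] ℝ) (y x : A) : dualMulLeft ξ y x = ξ (y * x) := rfl

@[simp] lemma dualMulRight_apply (ξ : A →L[ℝ] ℝ) (y x : A) : dualMulRight ξ y x = ξ (x * y) :=
  rfl

lemma continuous_dualMulLeft (ξ : A →L[ℝ] ℝ) : Continuous (dualMulLeft ξ) :=
  continuous_const.clm_comp (ContinuousLinearMap.mul ℝ A).continuous

lemma continuous_dualMulRight (ξ : A →L[ℝ] ℝ) : Continuous (dualMulRight ξ) :=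
  continuous_const.clm_comp (ContinuousLinearMap.mul ℝ A).flip.continuous

end DualMul

section Convolution

variable {A : Type} [NormedRing A] [MeasurableSpace A]

instance [MeasurableMul₂ A] (ρ σ : Measure A) [IsProbabilityMeasure ρ]
    [IsProbabilityMeasure σ] : IsProbabilityMeasure (mulConv ρ σ) :=
  inferInstanceAs (IsProbabilityMeasure (ρ ∗ₘ σ))

instance [MeasurableAdd₂ A] (ρ σ : Measure A) [IsProbabilityMeasure ρ]
    [IsProbabilityMeasure σ] : IsProbabilityMeasure (addConv ρ σ) :=
  inferInstanceAs (IsProbabilityMeasure (ρ ∗ σ))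

instance [MeasurableSub₂ A] (ρ σ : Measure A) [IsProbabilityMeasure ρ]
    [IsProbabilityMeasure σ] : IsProbabilityMeasure (subConv ρ σ) :=
  Measure.isProbabilityMeasure_map measurable_sub.aemeasurable

instance [MeasurableMul₂ A] (ρ : Measure A) [IsProbabilityMeasure ρ] (n : ℕ) :
    IsProbabilityMeasure (mulConvPow ρ n) := by
  induction n with
  | zero => exact Measure.dirac.isProbabilityMeasure
  | succ n ih => exact inferInstanceAs (IsProbabilityMeasure (mulConv ρ _))

instance [MeasurableAdd₂ A] (ρ : Measure A) [IsProbabilityMeasure ρ] (n : ℕ) :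
    IsProbabilityMeasure (addConvPow ρ n) := by
  induction n with
  | zero => exact Measure.dirac.isProbabilityMeasure
  | succ n ih => exact inferInstanceAs (IsProbabilityMeasure (addConv ρ _))

lemma mulConvPow_one [MeasurableMul₂ A] (ρ : Measure A) [SFinite ρ] : mulConvPow ρ 1 = ρ :=
  Measure.mconv_dirac_one ρ

variable [NormedAlgebra ℝ A] [OpensMeasurableSpace A] (ρ σ : Measure A) [IsFiniteMeasure ρ]
  [IsFiniteMeasure σ] (ξ : A →L[ℝ] ℝ)

lemma fourierTransform_mulConv [MeasurableMul₂ A] :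
    fourierTransform (mulConv ρ σ) ξ = ∫ x, fourierTransform σ (dualMulLeft ξ x) ∂ρ := by
  simp only [mulConv, fourierTransform_map_prod ρ σ measurable_mul,
    fourierTransform_eq_integral_fourierChar, dualMulLeft_apply]

lemma fourierTransform_mulConv' [MeasurableMul₂ A] :
    fourierTransform (mulConv ρ σ) ξ = ∫ y, fourierTransform ρ (dualMulRight ξ y) ∂σ := by
  rw [mulConv, fourierTransform_map_prod ρ σ measurable_mul, integral_integral_swap
    (integrable_fourierChar_comp (g := fun p : A × A => ξ (p.1 * p.2)) _
      (ξ.continuous.measurable.comp measurable_mul).aestronglyMeasurable)]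
  simp only [fourierTransform_eq_integral_fourierChar, dualMulRight_apply]

lemma fourierTransform_addConv [MeasurableAdd₂ A] :
    fourierTransform (addConv ρ σ) ξ = fourierTransform ρ ξ * fourierTransform σ ξ := by
  simp only [addConv, fourierTransform_map_prod ρ σ measurable_add,
    fourierTransform_eq_integral_fourierChar, map_add, AddChar.map_add_eq_mul, Circle.coe_mul,
    integral_const_mul, integral_mul_const]

lemma fourierTransform_subConv [MeasurableSub₂ A] :
    fourierTransform (subConv ρ σ) ξ = fourierTransform ρ ξ * conj (fourierTransform σ ξ) := by
  simp only [subConv, fourierTransform_map_prod ρ σ measurable_sub,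
    fourierTransform_eq_integral_fourierChar, map_sub, AddChar.map_sub_eq_div, div_eq_mul_inv,
    Circle.coe_mul, Circle.coe_inv_eq_conj, integral_const_mul, integral_mul_const, integral_conj]

lemma fourierTransform_dirac (a : A) : fourierTransform (Measure.dirac a) ξ = 𝐞 (ξ a) := by
  rw [fourierTransform_eq_integral_fourierChar, integral_dirac]

lemma fourierTransform_addConvPow [MeasurableAdd₂ A] (ν : Measure A) [IsProbabilityMeasure ν]
    (n : ℕ) : fourierTransform (addConvPow ν n) ξ = fourierTransform ν ξ ^ n := by
  induction n with
  | zero => simp [addConvPow, fourierTransform_dirac]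
  | succ n ih => rw [addConvPow, fourierTransform_addConv, ih, pow_succ']

end Convolution

lemma pow_integral_le_integral_pow {α : Type*} [MeasurableSpace α] {μ : Measure α}
    [IsProbabilityMeasure μ] {f : α → ℝ} (hf : AEStronglyMeasurable f μ)
    (hf01 : ∀ᵐ x ∂μ, f x ∈ Set.Icc 0 1) (k : ℕ) :
    (∫ x, f x ∂μ) ^ k ≤ ∫ x, f x ^ k ∂μ := by
  have hbound : ∀ j : ℕ, ∀ᵐ x ∂μ, ‖f x ^ j‖ ≤ 1 := fun j => hf01.mono fun x hx => by
    rw [norm_pow, Real.norm_of_nonneg hx.1]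
    exact pow_le_one₀ hx.1 hx.2
  refine (convexOn_pow k).map_integral_le (continuous_pow k).continuousOn isClosed_Ici
    (hf01.mono fun x hx => hx.1) (.of_bound hf 1 ?_) (.of_bound (hf.pow k) 1 (hbound k))
  simpa using hbound 1

section Comparison

variable {A : Type} [NormedRing A] [NormedAlgebra ℝ A] [MeasurableSpace A] [BorelSpace A]
  [SecondCountableTopology A] (ν : Measure A) [IsProbabilityMeasure ν] (ξ : A →L[ℝ] ℝ)

lemma fourierTransform_subConv_addConvPow (l : ℕ) :
    fourierTransform (subConv (addConvPow ν l) (addConvPow ν l)) ξ =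
      ((‖fourierTransform ν ξ‖ ^ (2 * l) : ℝ) : ℂ) := by
  rw [fourierTransform_subConv, fourierTransform_addConvPow, Complex.mul_conj,
    Complex.normSq_eq_norm_sq, norm_pow, ← pow_mul, mul_comm l 2]

lemma fourierTransform_mulConv_subConv_addConvPow (l : ℕ) (P : Measure A)
    [IsProbabilityMeasure P] :
    fourierTransform (mulConv (subConv (addConvPow ν l) (addConvPow ν l)) P) ξ =
      ((∫ y, ‖fourierTransform ν (dualMulRight ξ y)‖ ^ (2 * l) ∂P : ℝ) : ℂ) := by
  simp only [fourierTransform_mulConv', fourierTransform_subConv_addConvPow]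
  exact integral_ofReal

lemma norm_fourierTransform_mulConv_pow_le {Q P : Measure A} [IsProbabilityMeasure Q]
    [IsProbabilityMeasure P] {N : ℕ}
    (hQP : ∀ η, ‖fourierTransform Q η‖ ^ N ≤ (fourierTransform P η).re) :
    ‖fourierTransform (mulConv ν Q) ξ‖ ^ N ≤ ∫ y, ‖fourierTransform ν (dualMulRight ξ y)‖ ∂P := by
  have hQ := ((continuous_fourierTransform Q).comp (continuous_dualMulLeft ξ)).aestronglyMeasurable
    (μ := ν)
  have hP := ((continuous_fourierTransform P).comp (continuous_dualMulLeft ξ)).aestronglyMeasurable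
    (μ := ν)
  have hP_int : Integrable (fun x => fourierTransform P (dualMulLeft ξ x)) ν :=
    .of_bound hP 1 (ae_of_all _ fun x => norm_fourierTransform_le_one P _)
  calc ‖fourierTransform (mulConv ν Q) ξ‖ ^ N
      ≤ (∫ x, ‖fourierTransform Q (dualMulLeft ξ x)‖ ∂ν) ^ N := by
        rw [fourierTransform_mulConv]
        exact pow_le_pow_left₀ (norm_nonneg _) (norm_integral_le_integral_norm _) N
    _ ≤ ∫ x, ‖fourierTransform Q (dualMulLeft ξ x)‖ ^ N ∂ν :=
        pow_integral_le_integral_pow hQ.norm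
          (ae_of_all _ fun x => ⟨norm_nonneg _, norm_fourierTransform_le_one Q _⟩) N
    _ ≤ ∫ x, (fourierTransform P (dualMulLeft ξ x)).re ∂ν :=
        integral_mono_of_nonneg (ae_of_all _ fun x => by positivity) hP_int.re
          (ae_of_all _ fun x => hQP _)
    _ = (fourierTransform (mulConv ν P) ξ).re := by
        rw [fourierTransform_mulConv]
        exact integral_re hP_int
    _ ≤ ‖fourierTransform (mulConv ν P) ξ‖ := Complex.re_le_norm _
    _ ≤ ∫ y, ‖fourierTransform ν (dualMulRight ξ y)‖ ∂P := by
        rw [fourierTransform_mulConv']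
        exact norm_integral_le_integral_norm _

lemma pow_integral_norm_le_re_fourierTransform_mulConv (l : ℕ) (P : Measure A)
    [IsProbabilityMeasure P] :
    (∫ y, ‖fourierTransform ν (dualMulRight ξ y)‖ ∂P) ^ (2 * l) ≤
      (fourierTransform (mulConv (subConv (addConvPow ν l) (addConvPow ν l)) P) ξ).re := by
  rw [fourierTransform_mulConv_subConv_addConvPow, Complex.ofReal_re]
  exact pow_integral_le_integral_pow
    ((continuous_fourierTransform ν).comp (continuous_dualMulRight ξ)).aestronglyMeasurable.norm
    (ae_of_all _ fun y => ⟨norm_nonneg _, norm_fourierTransform_le_one ν _⟩) _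

lemma norm_fourierTransform_mulConvPow_pow_le (l m : ℕ) (hm : 1 ≤ m) :
    ‖fourierTransform (mulConvPow ν m) ξ‖ ^ ((2 * l) ^ m) ≤
      (fourierTransform (mulConvPow (subConv (addConvPow ν l) (addConvPow ν l)) m) ξ).re := by
  induction m, hm using Nat.le_induction generalizing ξ with
  | base =>
    rw [mulConvPow_one, mulConvPow_one, fourierTransform_subConv_addConvPow, pow_one,
      Complex.ofReal_re]
  | succ m _ ih =>
    calc ‖fourierTransform (mulConv ν (mulConvPow ν m)) ξ‖ ^ ((2 * l) ^ (m + 1))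
        = (‖fourierTransform (mulConv ν (mulConvPow ν m)) ξ‖ ^ ((2 * l) ^ m)) ^ (2 * l) := by
          rw [pow_succ, pow_mul]
      _ ≤ (∫ y, ‖fourierTransform ν (dualMulRight ξ y)‖
            ∂(mulConvPow (subConv (addConvPow ν l) (addConvPow ν l)) m)) ^ (2 * l) :=
          pow_le_pow_left₀ (by positivity) (norm_fourierTransform_mulConv_pow_le ν ξ ih) _
      _ ≤ _ := pow_integral_norm_le_re_fourierTransform_mulConv ν ξ l _

end Comparison

theorem stmt3_general (ν : Measure E) [IsProbabilityMeasure ν] (l : ℕ)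
    (μ : Measure E) (hμ : μ = subConv (addConvPow ν l) (addConvPow ν l))
    (m : ℕ) (hm : 1 ≤ m) (ξ : E →L[ℝ] ℝ) :
    (fourierTransform (mulConvPow μ m) ξ).im = 0 ∧
    0 ≤ (fourierTransform (mulConvPow μ m) ξ).re ∧
    ‖fourierTransform (mulConvPow ν m) ξ‖ ^ ((2 * l) ^ m) ≤
      (fourierTransform (mulConvPow μ m) ξ).re := by
  subst hμ
  obtain ⟨n, rfl⟩ : ∃ n, m = n + 1 := ⟨m - 1, by omega⟩
  have hreal := fourierTransform_mulConv_subConv_addConvPow ν ξ l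
    (mulConvPow (subConv (addConvPow ν l) (addConvPow ν l)) n)
  rw [← mulConvPow] at hreal
  refine ⟨by rw [hreal, Complex.ofReal_im], ?_, norm_fourierTransform_mulConvPow_pow_le ν ξ l _ hm⟩
  rw [hreal, Complex.ofReal_re]
  positivity

/-- Lemma on comparison of Fourier coefficients: with `μ = ν^{⊞l} ⊟ ν^{⊞l}`, the Fourier
coefficient of `μ^{*m}` is a nonnegative real number and dominates
`|\widehat{ν^{*m}}(ξ)|^{(2l)^m}`. -/
theorem stmt3 (ν : Measure E) [IsProbabilityMeasure ν] (l : ℕ) (hl : 1 ≤ l)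
    (μ : Measure E) (hμ : μ = subConv (addConvPow ν l) (addConvPow ν l))
    (m : ℕ) (hm : 1 ≤ m) (ξ : E →L[ℝ] ℝ) :
    (fourierTransform (mulConvPow μ m) ξ).im = 0 ∧
    0 ≤ (fourierTransform (mulConvPow μ m) ξ).re ∧
    ‖fourierTransform (mulConvPow ν m) ξ‖ ^ ((2 * l) ^ m) ≤
      (fourierTransform (mulConvPow μ m) ξ).re :=
  stmt3_general ν l μ hμ m hm ξ
end

section
/- Let E be a finite-dimensional real simple algebra and let f: Grass(k, E) → ℝ be defined on the Grassmannian of k-dimensional subspaces of E (0 < k < dim E) by f(W) = ∫∫_{B_E(0,1) × B_W(0,1)} (d(xw, W) + d(wx, W)) dx dw. Then f never vanishes; in particular f has a positive minimum on the Grassmannian. -/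
/-!
Both `x ↦ d(xw, W) + d(wx, W)` and `w ↦ d(xw, W) + d(wx, W)` are continuous seminorms, and a
continuous seminorm `p` on a `d`-dimensional space integrates over the unit ball to at least
`2^{-(d+1)} p(v) vol(B)` for every `v` in the ball: on the ball of radius `1/2` centred at `v/2`,
which is invariant under `w ↦ v - w`, we have `p w + p (v - w) ≥ p v`. Hence it suffices to find
`δ > 0` such that every `k`-dimensional `W` admits `x`, `w` in the unit balls of `E`, `W` with
`d(xw, W) + d(wx, W) ≥ δ`.

For that, every subspace is the range of an idempotent `P` of norm at most a fixed `C`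
(a conjugated orthogonal projection), and `0 < k < dim E` means `P ≠ 0, 1`; such idempotents form
a compact set. On it, `P ↦ sup_{‖x‖, ‖u‖ ≤ 1} ‖(1 - P)(x P u)‖ + ‖(1 - P)(P u x)‖` is continuous,
and it does not vanish, since otherwise the range of `P` would be a proper nonzero two-sided ideal.
-/

open MeasureTheory Metric Module

theorem norm_inv_norm_add_one_smul_le_one {M : Type*} [SeminormedAddCommGroup M]
    [NormedSpace ℝ M] (v : M) : ‖(‖v‖ + 1)⁻¹ • v‖ ≤ 1 := by
  rw [norm_smul, norm_inv, Real.norm_of_nonneg (by positivity), inv_mul_le_iff₀ (by positivity)]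
  linarith

theorem IsIdempotentElem.one_le_norm {R : Type*} [NormedRing R] {a : R}
    (ha : IsIdempotentElem a) (h0 : a ≠ 0) : 1 ≤ ‖a‖ := by
  refine (le_mul_iff_one_le_right (norm_pos_iff.2 h0)).1 ?_
  calc ‖a‖ = ‖a * a‖ := by rw [ha.eq]
    _ ≤ ‖a‖ * ‖a‖ := norm_mul_le a a

theorem LinearMap.apply_apply_mem_of_forall_norm_le_one {M N F : Type*} [SeminormedAddCommGroup M]
    [NormedSpace ℝ M] [SeminormedAddCommGroup N] [NormedSpace ℝ N] [AddCommGroup F] [Module ℝ F]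
    {I : Submodule ℝ N} {J : Submodule ℝ F} (B : M →ₗ[ℝ] N →ₗ[ℝ] F)
    (h : ∀ x : M, ‖x‖ ≤ 1 → ∀ y ∈ I, ‖y‖ ≤ 1 → B x y ∈ J) (x : M) {y : N} (hy : y ∈ I) :
    B x y ∈ J := by
  have := J.smul_mem ((‖x‖ + 1) * (‖y‖ + 1)) (h _ (norm_inv_norm_add_one_smul_le_one x) _
    (I.smul_mem _ hy) (norm_inv_norm_add_one_smul_le_one y))
  simpa [smul_smul, mul_assoc, mul_left_comm (‖y‖ + 1), show ‖x‖ + 1 ≠ 0 by positivity,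
    show ‖y‖ + 1 ≠ 0 by positivity] using this

section Subspace

variable {E : Type*} [NormedAddCommGroup E] [NormedSpace ℝ E]

theorem exists_isIdempotentElem_range_eq_norm_le [FiniteDimensional ℝ E] :
    ∃ C, ∀ W : Submodule ℝ E, ∃ P : E →L[ℝ] E,
      IsIdempotentElem P ∧ P.range = W ∧ ‖P‖ ≤ C := by
  let e : EuclideanSpace ℝ (Fin (finrank ℝ E)) ≃L[ℝ] E := toEuclidean.symm
  refine ⟨‖e.toContinuousLinearMap‖ * ‖e.symm.toContinuousLinearMap‖, fun W => ?_⟩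
  let K := W.comap e.toLinearMap
  refine ⟨e.conjContinuousAlgEquiv K.starProjection,
    K.isIdempotentElem_starProjection.map _, ?_, ?_⟩
  · ext v
    refine ⟨?_, fun hv => ⟨v, ?_⟩⟩
    · rintro ⟨u, rfl⟩
      exact K.starProjection_apply_mem (e.symm u)
    · have : e.symm v ∈ K := by simpa [K] using hv
      simp [K.starProjection_eq_self_iff.2 this]
  · calc ‖e.conjContinuousAlgEquiv K.starProjection‖
        ≤ ‖e.toContinuousLinearMap‖ * (‖K.starProjection‖ * ‖e.symm.toContinuousLinearMap‖) :=
          (ContinuousLinearMap.opNorm_comp_le _ _).trans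
            (by gcongr; exact ContinuousLinearMap.opNorm_comp_le _ _)
      _ ≤ ‖e.toContinuousLinearMap‖ * ‖e.symm.toContinuousLinearMap‖ := by
          gcongr
          exact mul_le_of_le_one_left (norm_nonneg _) K.starProjection_norm_le

theorem norm_one_sub_apply_le_mul_infDist {P : E →L[ℝ] E} (hP : IsIdempotentElem P) (v : E) :
    ‖(1 - P) v‖ ≤ ‖1 - P‖ * infDist v P.range := by
  rcases (norm_nonneg (1 - P)).eq_or_lt with h | hpos
  · simp [(norm_eq_zero.1 h.symm)]
  rw [← div_le_iff₀' hpos, le_infDist ⟨0, P.range.zero_mem⟩]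
  rintro _ ⟨u, rfl⟩
  rw [div_le_iff₀' hpos, dist_eq_norm]
  have hPu : P (P u) = P u := congr($hP.eq u)
  calc ‖(1 - P) v‖ = ‖(1 - P) (v - P u)‖ := by simp [hPu]
    _ ≤ ‖1 - P‖ * ‖v - P u‖ := (1 - P).le_opNorm _

noncomputable def Submodule.infDistSeminorm (W : Submodule ℝ E) : Seminorm ℝ E :=
  (normSeminorm ℝ (E ⧸ W)).comp W.mkQ

@[simp]
theorem Submodule.infDistSeminorm_apply (W : Submodule ℝ E) (v : E) :
    W.infDistSeminorm v = infDist v W :=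
  QuotientAddGroup.norm_mk (S := W.toAddSubgroup) v

end Subspace

section HaarBall

variable {V : Type*} [NormedAddCommGroup V] [NormedSpace ℝ V] [MeasurableSpace V] [BorelSpace V]
  [FiniteDimensional ℝ V] (μ : Measure V) [μ.IsAddHaarMeasure]

theorem setIntegral_closedBall_half_comp_sub_left (f : V → ℝ) (v : V) (r : ℝ) :
    ∫ w in closedBall ((2 : ℝ)⁻¹ • v) r, f (v - w) ∂μ =
      ∫ w in closedBall ((2 : ℝ)⁻¹ • v) r, f w ∂μ := by
  have hpre : (fun w => v - w) ⁻¹' closedBall ((2 : ℝ)⁻¹ • v) r =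
      closedBall ((2 : ℝ)⁻¹ • v) r := by
    ext w
    simp only [Set.mem_preimage, mem_closedBall, dist_eq_norm]
    rw [← norm_neg]
    congr! 2
    module
  have := (Measure.measurePreserving_sub_left μ v).setIntegral_preimage_emb
    (Homeomorph.subLeft v).measurableEmbedding f (closedBall ((2 : ℝ)⁻¹ • v) r)
  rwa [hpre] at this

theorem Seminorm.apply_mul_measureReal_closedBall_le_setIntegral (p : Seminorm ℝ V)
    (hp : Continuous p) {v : V} (hv : ‖v‖ ≤ 1) :
    p v * μ.real (Metric.closedBall 0 1) ≤
      2 ^ (finrank ℝ V + 1) * ∫ w in Metric.closedBall 0 1, p w ∂μ := by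
  set S := Metric.closedBall ((2 : ℝ)⁻¹ • v) 2⁻¹
  have hint : IntegrableOn p S μ :=
    hp.continuousOn.integrableOn_compact (isCompact_closedBall _ _)
  have hint_refl : IntegrableOn (fun w => p (v - w)) S μ :=
    (hp.comp (continuous_sub_left v)).continuousOn.integrableOn_compact (isCompact_closedBall _ _)
  have hSB : S ⊆ Metric.closedBall 0 1 := by
    refine closedBall_subset_closedBall' ?_
    rw [dist_zero_right, norm_smul]
    norm_num
    linarith
  have hμS : μ.real (Metric.closedBall 0 1) = 2 ^ finrank ℝ V * μ.real S := by
    rw [Measure.addHaar_real_closedBall' μ _ (r := 2⁻¹) (by norm_num), inv_pow, ← mul_assoc,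
      mul_inv_cancel₀ (by positivity), one_mul]
  have hsum : p v * μ.real S ≤ 2 * ∫ w in S, p w ∂μ :=
    calc p v * μ.real S = ∫ _ in S, p v ∂μ := by rw [setIntegral_const, smul_eq_mul, mul_comm]
      _ ≤ ∫ w in S, (p w + p (v - w)) ∂μ := by
          refine setIntegral_mono_on (integrableOn_const measure_closedBall_lt_top.ne)
            (hint.add hint_refl) measurableSet_closedBall fun w _ => ?_
          simpa using map_add_le_add p w (v - w)
      _ = 2 * ∫ w in S, p w ∂μ := by
          rw [integral_add hint hint_refl, setIntegral_closedBall_half_comp_sub_left]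
          ring
  have hmono : ∫ w in S, p w ∂μ ≤ ∫ w in Metric.closedBall 0 1, p w ∂μ :=
    setIntegral_mono_set (hp.continuousOn.integrableOn_compact (isCompact_closedBall _ _))
      (Filter.Eventually.of_forall fun w => apply_nonneg p w) hSB.eventuallyLE
  calc p v * μ.real (Metric.closedBall 0 1) = 2 ^ finrank ℝ V * (p v * μ.real S) := by
        rw [hμS]; ring
    _ ≤ 2 ^ finrank ℝ V * (2 * ∫ w in S, p w ∂μ) := by gcongr
    _ ≤ 2 ^ (finrank ℝ V + 1) * ∫ w in Metric.closedBall 0 1, p w ∂μ := by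
        rw [pow_succ, mul_assoc]
        gcongr

end HaarBall

theorem mul_measureReal_mul_measureReal_closedBall_le_setIntegral_setIntegral
    {V U : Type*} [NormedAddCommGroup V] [NormedSpace ℝ V] [MeasurableSpace V] [BorelSpace V]
    [FiniteDimensional ℝ V] [NormedAddCommGroup U] [NormedSpace ℝ U] [MeasurableSpace U]
    [BorelSpace U] [FiniteDimensional ℝ U] (μ : Measure V) [μ.IsAddHaarMeasure] (ν : Measure U)
    [ν.IsAddHaarMeasure] {f : V → U → ℝ} (hf : Continuous (Function.uncurry f))
    (p : U → Seminorm ℝ V) (hp : ∀ u v, p u v = f v u)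
    (q : V → Seminorm ℝ U) (hq : ∀ v u, q v u = f v u) {v : V} {u : U}
    (hv : ‖v‖ ≤ 1) (hu : ‖u‖ ≤ 1) :
    f v u * μ.real (closedBall 0 1) * ν.real (closedBall 0 1) ≤
      2 ^ (finrank ℝ V + 1) * 2 ^ (finrank ℝ U + 1) *
        ∫ x in closedBall 0 1, ∫ y in closedBall 0 1, f x y ∂ν ∂μ := by
  have hfu : Continuous (f · u) := hf.comp (.prodMk_left u)
  have hpc : Continuous (p u) := by rwa [show ⇑(p u) = (f · u) from funext (hp u)]
  have hqc : ∀ v, Continuous (q v) := fun v => by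
    rw [show ⇑(q v) = f v from funext (hq v)]
    exact hf.comp (.prodMk_right v)
  have hinner : ∀ x, f x u * ν.real (closedBall 0 1) ≤
      2 ^ (finrank ℝ U + 1) * ∫ y in closedBall 0 1, f x y ∂ν := fun x => by
    simpa [hq] using (q x).apply_mul_measureReal_closedBall_le_setIntegral ν (hqc x) hu
  have houter : f v u * μ.real (closedBall 0 1) ≤
      2 ^ (finrank ℝ V + 1) * ∫ x in closedBall 0 1, f x u ∂μ := by
    simpa [hp] using (p u).apply_mul_measureReal_closedBall_le_setIntegral μ hpc hv
  have hintegrate : (∫ x in closedBall 0 1, f x u ∂μ) * ν.real (closedBall 0 1) ≤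
      2 ^ (finrank ℝ U + 1) * ∫ x in closedBall 0 1, ∫ y in closedBall 0 1, f x y ∂ν ∂μ := by
    rw [← integral_mul_const, ← integral_const_mul]
    refine setIntegral_mono_on ?_ ?_ measurableSet_closedBall fun x _ => hinner x
    · exact (hfu.mul continuous_const).continuousOn.integrableOn_compact
        (isCompact_closedBall _ _)
    · exact (continuous_const.mul (continuous_parametric_integral_of_continuous hf
        (isCompact_closedBall _ _))).continuousOn.integrableOn_compact (isCompact_closedBall _ _)
  calc f v u * μ.real (closedBall 0 1) * ν.real (closedBall 0 1)
      ≤ 2 ^ (finrank ℝ V + 1) * (∫ x in closedBall 0 1, f x u ∂μ) * ν.real (closedBall 0 1) := by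
        gcongr
    _ ≤ _ := by
        rw [mul_assoc, mul_assoc]
        gcongr

section SimpleAlgebra

variable {E : Type*} [NormedRing E] [NormedAlgebra ℝ E]

/-- Stands in for `d(x P u, range P) + d(P u x, range P)` (compare
`norm_one_sub_apply_le_mul_infDist`), but is jointly continuous in `P`. -/
noncomputable def idealDefect (P : E →L[ℝ] E) (x u : E) : ℝ :=
  ‖(1 - P) (x * P u)‖ + ‖(1 - P) (P u * x)‖

theorem mul_mem_range_of_idealDefect_eq_zero {P : E →L[ℝ] E} (hP : IsIdempotentElem P)
    (h : ∀ x u : E, ‖x‖ ≤ 1 → ‖u‖ ≤ 1 → idealDefect P x u = 0) (a : E) {y : E}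
    (hy : y ∈ P.range) : a * y ∈ P.range ∧ y * a ∈ P.range := by
  have hrange {v : E} : v ∈ P.range ↔ P v = v :=
    LinearMap.IsIdempotentElem.mem_range_iff (ContinuousLinearMap.IsIdempotentElem.toLinearMap hP)
  have hmem : ∀ v, (1 - P) v = 0 → v ∈ P.range := fun v hv => by
    rw [hrange]
    exact (sub_eq_zero.1 hv).symm
  have hfix : ∀ y ∈ P.range, P y = y := fun y hy => hrange.1 hy
  have hball : ∀ x : E, ‖x‖ ≤ 1 → ∀ y ∈ P.range, ‖y‖ ≤ 1 →
      x * y ∈ P.range ∧ y * x ∈ P.range := fun x hx y hy hy1 => by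
    have h0 := h x y hx hy1
    rw [idealDefect, hfix y hy] at h0
    have := norm_nonneg ((1 - P) (x * y))
    have := norm_nonneg ((1 - P) (y * x))
    exact ⟨hmem _ (norm_eq_zero.1 (by linarith)), hmem _ (norm_eq_zero.1 (by linarith))⟩
  exact ⟨LinearMap.apply_apply_mem_of_forall_norm_le_one (LinearMap.mul ℝ E)
      (fun x hx y hy hy1 => (hball x hx y hy hy1).1) a hy,
    LinearMap.apply_apply_mem_of_forall_norm_le_one (LinearMap.mul ℝ E).flip
      (fun x hx y hy hy1 => (hball x hx y hy hy1).2) a hy⟩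

theorem exists_idealDefect_pos
    (hsimple : ∀ I : Submodule ℝ E, (∀ a : E, ∀ x ∈ I, a * x ∈ I ∧ x * a ∈ I) → I = ⊥ ∨ I = ⊤)
    {P : E →L[ℝ] E} (hP : IsIdempotentElem P) (hP0 : P ≠ 0) (hP1 : P ≠ 1) :
    ∃ x u : E, ‖x‖ ≤ 1 ∧ ‖u‖ ≤ 1 ∧ 0 < idealDefect P x u := by
  by_contra! h
  have hideal := mul_mem_range_of_idealDefect_eq_zero hP fun x u hx hu =>
    (h x u hx hu).antisymm (add_nonneg (norm_nonneg _) (norm_nonneg _))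
  rcases hsimple P.range hideal with hbot | htop
  · exact hP0 (ContinuousLinearMap.coe_injective (LinearMap.range_eq_bot.1 hbot))
  · refine hP1 (ContinuousLinearMap.ext fun v => ?_)
    exact (LinearMap.IsIdempotentElem.mem_range_iff
      (ContinuousLinearMap.IsIdempotentElem.toLinearMap hP)).1 (htop ▸ Submodule.mem_top)

theorem exists_pos_forall_exists_le_idealDefect [FiniteDimensional ℝ E]
    (hsimple : ∀ I : Submodule ℝ E, (∀ a : E, ∀ x ∈ I, a * x ∈ I ∧ x * a ∈ I) → I = ⊥ ∨ I = ⊤)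
    (C : ℝ) : ∃ δ > 0, ∀ P : E →L[ℝ] E, IsIdempotentElem P → ‖P‖ ≤ C → P ≠ 0 → P ≠ 1 →
      ∃ x u : E, ‖x‖ ≤ 1 ∧ ‖u‖ ≤ 1 ∧ δ ≤ idealDefect P x u := by
  set K : Set (E × E) := closedBall 0 1 ×ˢ closedBall 0 1
  have hK : IsCompact K := (isCompact_closedBall _ _).prod (isCompact_closedBall _ _)
  have hKne : K.Nonempty := ⟨0, by simp [K]⟩
  have hcont : Continuous fun q : (E →L[ℝ] E) × E × E => idealDefect q.1 q.2.1 q.2.2 := by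
    unfold idealDefect; fun_prop
  have hmax : ∀ P : E →L[ℝ] E, ∃ p ∈ K,
      sSup ((fun p => idealDefect P p.1 p.2) '' K) = idealDefect P p.1 p.2 ∧
      ∀ q ∈ K, idealDefect P q.1 q.2 ≤ idealDefect P p.1 p.2 := fun P =>
    hK.exists_sSup_image_eq_and_ge hKne (hcont.comp (.prodMk_right P)).continuousOn
  set S := {P : E →L[ℝ] E | IsIdempotentElem P ∧ ‖P‖ ≤ C ∧ 1 ≤ ‖P‖ ∧ 1 ≤ ‖1 - P‖}
  have hS : IsCompact S := by
    refine (isCompact_closedBall (0 : E →L[ℝ] E) C).of_isClosed_subset ?_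
      fun P hP => mem_closedBall_zero_iff.2 hP.2.1
    exact (isClosed_eq (f := fun P : E →L[ℝ] E => P * P) (by fun_prop) (by fun_prop)).inter
      ((isClosed_le (f := fun P : E →L[ℝ] E => ‖P‖) (by fun_prop) (by fun_prop)).inter
      ((isClosed_le (g := fun P : E →L[ℝ] E => ‖P‖) (by fun_prop) (by fun_prop)).inter
      (isClosed_le (g := fun P : E →L[ℝ] E => ‖1 - P‖) (by fun_prop) (by fun_prop))))
  have hpos : ∀ P ∈ S, 0 < sSup ((fun p => idealDefect P p.1 p.2) '' K) := by
    rintro P ⟨hP, -, hP0, hP1⟩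
    obtain ⟨x, u, hx, hu, hxu⟩ := exists_idealDefect_pos hsimple hP
      (by rintro rfl; norm_num at hP0) (by rintro rfl; norm_num at hP1)
    obtain ⟨p, -, hp, hpmax⟩ := hmax P
    exact hp ▸ hxu.trans_le (hpmax (x, u) (by simpa [K] using ⟨hx, hu⟩))
  obtain ⟨δ, hδ, hδS⟩ := hS.exists_forall_le' (hK.continuous_sSup hcont).continuousOn hpos
  refine ⟨δ, hδ, fun P hP hPC hP0 hP1 => ?_⟩
  have hPS : P ∈ S :=
    ⟨hP, hPC, hP.one_le_norm hP0, hP.one_sub.one_le_norm (sub_ne_zero.2 hP1.symm)⟩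
  obtain ⟨p, hpK, hp, -⟩ := hmax P
  exact ⟨p.1, p.2, by simpa using hpK.1, by simpa using hpK.2, hp ▸ hδS P hPS⟩

theorem exists_pos_forall_finrank_eq_exists_le_infDist [FiniteDimensional ℝ E]
    (hsimple : ∀ I : Submodule ℝ E, (∀ a : E, ∀ x ∈ I, a * x ∈ I ∧ x * a ∈ I) → I = ⊥ ∨ I = ⊤)
    {k : ℕ} (hk0 : 0 < k) (hk : k < finrank ℝ E) :
    ∃ δ > 0, ∀ W : Submodule ℝ E, finrank ℝ W = k → ∃ x : E, ‖x‖ ≤ 1 ∧ ∃ w : W, ‖w‖ ≤ 1 ∧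
      δ ≤ infDist (x * w) W + infDist (w * x) W := by
  obtain ⟨C₀, hC₀⟩ := exists_isIdempotentElem_range_eq_norm_le (E := E)
  set C := max C₀ 1
  have hC : 0 < C := lt_max_of_lt_right one_pos
  obtain ⟨δ, hδ, hdefect⟩ := exists_pos_forall_exists_le_idealDefect hsimple C
  refine ⟨δ / (C * (1 + C)), by positivity, fun W hW => ?_⟩
  obtain ⟨P, hP, rfl, hPC₀⟩ := hC₀ W
  have hPC : ‖P‖ ≤ C := hPC₀.trans (le_max_left _ _)
  have hP0 : P ≠ 0 := by
    rintro rfl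
    rw [ContinuousLinearMap.toLinearMap_zero, LinearMap.range_zero, finrank_bot] at hW
    omega
  have hP1 : P ≠ 1 := by
    rintro rfl
    rw [ContinuousLinearMap.toLinearMap_one, Module.End.one_eq_id, LinearMap.range_id,
      finrank_top] at hW
    omega
  obtain ⟨x, u, hx, hu, hδu⟩ := hdefect P hP hPC hP0 hP1
  have hPu : ‖P u‖ ≤ C := (P.le_opNorm u).trans (by nlinarith [norm_nonneg P])
  refine ⟨x, hx, ⟨C⁻¹ • P u, P.range.smul_mem _ ⟨u, rfl⟩⟩, ?_, ?_⟩
  · rw [Submodule.coe_norm, norm_smul, norm_inv, Real.norm_of_nonneg hC.le]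
    exact inv_mul_le_one_of_le₀ hPu hC.le
  have hsmul : ∀ v, infDist (C⁻¹ • v) P.range = C⁻¹ * infDist v P.range := fun v => by
    simpa [abs_of_pos hC] using map_smul_eq_mul P.range.infDistSeminorm C⁻¹ v
  have h1P : ‖1 - P‖ ≤ 1 + C :=
    (norm_sub_le _ _).trans (add_le_add ContinuousLinearMap.norm_id_le hPC)
  have hδ' : δ ≤ (1 + C) * (infDist (x * P u) P.range + infDist (P u * x) P.range) :=
    calc δ ≤ idealDefect P x u := hδu
      _ ≤ ‖1 - P‖ * infDist (x * P u) P.range + ‖1 - P‖ * infDist (P u * x) P.range :=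
        add_le_add (norm_one_sub_apply_le_mul_infDist hP _)
          (norm_one_sub_apply_le_mul_infDist hP _)
      _ ≤ _ := by
        rw [← mul_add]
        exact mul_le_mul_of_nonneg_right h1P (add_nonneg infDist_nonneg infDist_nonneg)
  simp only [mul_smul_comm, smul_mul_assoc, hsmul, ← mul_add]
  rw [div_le_iff₀ (by positivity)]
  field_simp
  linarith

end SimpleAlgebra

theorem stmt13_general {E : Type} [NormedRing E] [NormedAlgebra ℝ E] [FiniteDimensional ℝ E]
    [MeasurableSpace E] [BorelSpace E]
    (hsimple : ∀ I : Submodule ℝ E, (∀ a : E, ∀ x ∈ I, a * x ∈ I ∧ x * a ∈ I) → I = ⊥ ∨ I = ⊤)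
    (k : ℕ) (hk0 : 0 < k) (hk : k < Module.finrank ℝ E)
    (volE : Measure E) [volE.IsAddHaarMeasure] :
    ∃ m : ℝ, 0 < m ∧
      ∀ W : Submodule ℝ E, Module.finrank ℝ W = k →
      ∀ νW : Measure W, νW.IsAddHaarMeasure → νW (Metric.closedBall 0 1) = 1 →
        m ≤ ∫ x in Metric.closedBall (0 : E) 1,
              (∫ w in Metric.closedBall (0 : W) 1,
                (Metric.infDist (x * (w : E)) (W : Set E) +
                  Metric.infDist ((w : E) * x) (W : Set E)) ∂νW) ∂volE := by
  obtain ⟨δ, hδ, hdefect⟩ := exists_pos_forall_finrank_eq_exists_le_infDist hsimple hk0 hk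
  have hvol : 0 < volE.real (closedBall 0 1) :=
    ENNReal.toReal_pos (measure_closedBall_pos volE 0 one_pos).ne'
      measure_closedBall_lt_top.ne
  refine ⟨δ * volE.real (closedBall 0 1) / (2 ^ (finrank ℝ E + 1) * 2 ^ (k + 1)),
    by positivity, fun W hW νW _ hνW => ?_⟩
  obtain ⟨x, hx, w, hw, hδxw⟩ := hdefect W hW
  have hcont : Continuous (Function.uncurry fun (x : E) (w : W) =>
      infDist (x * w) W + infDist (w * x) W) :=
    ((continuous_infDist_pt _).comp (by fun_prop)).add
      ((continuous_infDist_pt _).comp (by fun_prop))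
  have key := mul_measureReal_mul_measureReal_closedBall_le_setIntegral_setIntegral volE νW hcont
    (fun w => W.infDistSeminorm.comp (LinearMap.mulRight ℝ (w : E)) +
      W.infDistSeminorm.comp (LinearMap.mulLeft ℝ (w : E))) (fun _ _ => by simp)
    (fun x => W.infDistSeminorm.comp (LinearMap.mulLeft ℝ x ∘ₗ W.subtype) +
      W.infDistSeminorm.comp (LinearMap.mulRight ℝ x ∘ₗ W.subtype)) (fun _ _ => by simp) hx hw
  rw [measureReal_def νW, hνW, ENNReal.toReal_one, mul_one, hW] at key
  rw [div_le_iff₀ (by positivity)]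
  calc δ * volE.real (closedBall 0 1) ≤ _ := by gcongr
    _ ≤ _ := key
    _ = _ := by ring

/-- On a finite-dimensional simple real algebra `E`, the function on the Grassmannian of
`k`-dimensional subspaces `W ↦ ∫∫_{B_E(0,1) × B_W(0,1)} (d(xw,W) + d(wx,W)) dx dw`
never vanishes, and has a uniform positive lower bound (with the Haar measure on each `W`
normalized by `ν_W(B_W(0,1)) = 1`). -/
theorem stmt13 {E : Type} [NormedRing E] [NormedAlgebra ℝ E] [FiniteDimensional ℝ E]
    [MeasurableSpace E] [BorelSpace E] [Nontrivial E]
    (hsimple : ∀ I : Submodule ℝ E, (∀ a : E, ∀ x ∈ I, a * x ∈ I ∧ x * a ∈ I) → I = ⊥ ∨ I = ⊤)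
    (k : ℕ) (hk0 : 0 < k) (hk : k < Module.finrank ℝ E)
    (volE : Measure E) [volE.IsAddHaarMeasure] :
    ∃ m : ℝ, 0 < m ∧
      ∀ W : Submodule ℝ E, Module.finrank ℝ W = k →
      ∀ νW : Measure W, νW.IsAddHaarMeasure → νW (Metric.closedBall 0 1) = 1 →
        m ≤ ∫ x in Metric.closedBall (0 : E) 1,
              (∫ w in Metric.closedBall (0 : W) 1,
                (Metric.infDist (x * (w : E)) (W : Set E) +
                  Metric.infDist ((w : E) * x) (W : Set E)) ∂νW) ∂volE :=
  stmt13_general hsimple k hk0 hk volE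
end
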